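/- For the genus-one quintic data P₁⁽¹⁾ = (31/3)(1−B) + (5/12)(X−1) − (1/2)A, define P₁⁽ⁿ⁺¹⁾ by the covariant rule P^{(n+1)} = D(P^{(n)}) + [−n(A+1) − 0·(B − (5/2)X)] P^{(n)} (since 2−2g = 0 at g = 1); then each P₁⁽ⁿ⁾ is a polynomial in A, B, B₂, B₃, X of weighted degree at most n. -/

import Mathlib

open MvPolynomial Finsupp

noncomputable abbrev W (w : Fin 5 → ℕ) (p : MvPolynomial (Fin 5) ℚ) : ℕ :=
  weightedTotalDegree w p

lemma wtd_le_iff {w : Fin 5 → ℕ} {p : MvPolynomial (Fin 5) ℚ} {n : ℕ} :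
    W w p ≤ n ↔ ∀ d ∈ p.support, weight w d ≤ n := Finset.sup_le_iff

lemma wtd_zero {w : Fin 5 → ℕ} {n : ℕ} : W w (0 : MvPolynomial (Fin 5) ℚ) ≤ n := by
  rw [wtd_le_iff]; simp

lemma wtd_add {w : Fin 5 → ℕ} {p q : MvPolynomial (Fin 5) ℚ} {n : ℕ}
    (hp : W w p ≤ n) (hq : W w q ≤ n) : W w (p + q) ≤ n := by
  classical
  rw [wtd_le_iff] at *
  intro d hd
  rcases Finset.mem_union.mp (MvPolynomial.support_add hd) with h | h
  exacts [hp d h, hq d h]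

lemma wtd_neg {w : Fin 5 → ℕ} {p : MvPolynomial (Fin 5) ℚ} {n : ℕ}
    (hp : W w p ≤ n) : W w (-p) ≤ n := by
  rw [wtd_le_iff] at *
  simpa using hp

lemma wtd_sub {w : Fin 5 → ℕ} {p q : MvPolynomial (Fin 5) ℚ} {n : ℕ}
    (hp : W w p ≤ n) (hq : W w q ≤ n) : W w (p - q) ≤ n := by
  rw [sub_eq_add_neg]; exact wtd_add hp (wtd_neg hq)

lemma wtd_mul {w : Fin 5 → ℕ} {p q : MvPolynomial (Fin 5) ℚ} {m n : ℕ}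
    (hp : W w p ≤ m) (hq : W w q ≤ n) : W w (p * q) ≤ m + n := by
  classical
  rw [wtd_le_iff] at *
  intro d hd
  obtain ⟨a, ha, b, hb, rfl⟩ := Finset.mem_add.mp (MvPolynomial.support_mul p q hd)
  rw [map_add]
  exact add_le_add (hp a ha) (hq b hb)

lemma wtd_C {w : Fin 5 → ℕ} (r : ℚ) {n : ℕ} : W w (C r : MvPolynomial (Fin 5) ℚ) ≤ n := by
  rw [wtd_le_iff]
  intro d hd
  rw [C_apply] at hd
  have := MvPolynomial.support_monomial_subset hd
  simp only [Finset.mem_singleton] at this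
  subst this; simp

lemma wtd_one {w : Fin 5 → ℕ} {n : ℕ} : W w (1 : MvPolynomial (Fin 5) ℚ) ≤ n := by
  rw [← C_1]; exact wtd_C 1

lemma wtd_ofNat {w : Fin 5 → ℕ} (m : ℕ) [m.AtLeastTwo] {n : ℕ} :
    W w (OfNat.ofNat m : MvPolynomial (Fin 5) ℚ) ≤ n := by
  rw [← map_ofNat (C : ℚ →+* MvPolynomial (Fin 5) ℚ) m]; exact wtd_C _

lemma wtd_X {w : Fin 5 → ℕ} (i : Fin 5) {n : ℕ} (h : w i ≤ n) :
    W w (X i : MvPolynomial (Fin 5) ℚ) ≤ n := by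
  rw [wtd_le_iff]
  intro d hd
  rw [MvPolynomial.support_X, Finset.mem_singleton] at hd
  subst hd
  rw [weight_apply, Finsupp.sum_single_index] <;> simp [h]

lemma wtd_monomial {w : Fin 5 → ℕ} (d : Fin 5 →₀ ℕ) (r : ℚ) :
    W w (monomial d r : MvPolynomial (Fin 5) ℚ) ≤ weight w d := by
  rw [wtd_le_iff]
  intro e he
  have := MvPolynomial.support_monomial_subset he
  simp only [Finset.mem_singleton] at this
  subst this; rfl

lemma wtd_sum {w : Fin 5 → ℕ} {ι : Type*} (s : Finset ι) (g : ι → MvPolynomial (Fin 5) ℚ)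
    {n : ℕ} (h : ∀ i ∈ s, W w (g i) ≤ n) : W w (∑ i ∈ s, g i) ≤ n := by
  classical
  induction s using Finset.induction_on with
  | empty => simpa using wtd_zero
  | insert _ _ hx ih =>
    rw [Finset.sum_insert hx]
    exact wtd_add (h _ (Finset.mem_insert_self _ _))
      (ih fun i hi => h i (Finset.mem_insert_of_mem hi))


lemma wtd_mono {w : Fin 5 → ℕ} {p : MvPolynomial (Fin 5) ℚ} {m n : ℕ}
    (hp : W w p ≤ m) (h : m ≤ n) : W w p ≤ n := le_trans hp h

lemma wtd_pow {w : Fin 5 → ℕ} {p : MvPolynomial (Fin 5) ℚ} {m : ℕ} (k : ℕ)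
    (hp : W w p ≤ m) : W w (p ^ k) ≤ k * m := by
  induction k with
  | zero => simpa using (wtd_one (w := w) (n := 0))
  | succ k ih =>
    rw [pow_succ, Nat.succ_mul]
    exact wtd_mul ih hp

lemma wtd_smul {w : Fin 5 → ℕ} {p : MvPolynomial (Fin 5) ℚ} {n : ℕ} (r : ℚ)
    (hp : W w p ≤ n) : W w (r • p) ≤ n := by
  rw [wtd_le_iff] at *
  intro d hd
  exact hp d (Finsupp.support_smul hd)

lemma weight_single (w : Fin 5 → ℕ) (i : Fin 5) (k : ℕ) :
    weight w (Finsupp.single i k) = k * w i := by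
  rw [weight_apply, Finsupp.sum_single_index] <;> simp [mul_comm]

/-- The derivation `D` modeling `ψ∂_ψ` on `ℚ[A, B, B₂, B₃, X]` (variables indexed
`0 = A, 1 = B, 2 = B₂, 3 = B₃, 4 = X`), with the `A₂` and `B₄` substitution relations of the
quintic. -/
noncomputable def quinticDerivation :
    Derivation ℚ (MvPolynomial (Fin 5) ℚ) (MvPolynomial (Fin 5) ℚ) :=
  MvPolynomial.mkDerivation ℚ
    ![(-4 * X 2 - 2 * X 0 * X 1 - 2 * X 1 + 2 * X 1 ^ 2 - 2 * X 0
        + 10 * X 4 * X 1 + 5 * X 4 * X 0 - 5 * X 4 - 1) - X 0 ^ 2,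
      X 2 - X 1 ^ 2,
      X 3 - X 1 * X 2,
      (10 * X 4 * X 3 - 35 * X 4 * X 2 + 50 * X 4 * X 1 - 24 * X 4) - X 1 * X 3,
      5 * X 4 * (X 4 - 1)]

/-- The images of the generators under `quinticDerivation`. -/
noncomputable def qf : Fin 5 → MvPolynomial (Fin 5) ℚ :=
  ![(-4 * X 2 - 2 * X 0 * X 1 - 2 * X 1 + 2 * X 1 ^ 2 - 2 * X 0
        + 10 * X 4 * X 1 + 5 * X 4 * X 0 - 5 * X 4 - 1) - X 0 ^ 2,
      X 2 - X 1 ^ 2,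
      X 3 - X 1 * X 2,
      (10 * X 4 * X 3 - 35 * X 4 * X 2 + 50 * X 4 * X 1 - 24 * X 4) - X 1 * X 3,
      5 * X 4 * (X 4 - 1)]

lemma quinticDerivation_eq : quinticDerivation = MvPolynomial.mkDerivation ℚ qf := rfl

abbrev wv : Fin 5 → ℕ := ![1, 1, 2, 3, 1]

lemma wtd_qf (i : Fin 5) : W wv (qf i) ≤ wv i + 1 := by
  fin_cases i
  · show W wv ((-4 * X 2 - 2 * X 0 * X 1 - 2 * X 1 + 2 * X 1 ^ 2 - 2 * X 0
        + 10 * X 4 * X 1 + 5 * X 4 * X 0 - 5 * X 4 - 1) - X 0 ^ 2) ≤ 2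
    refine wtd_sub (wtd_sub (wtd_sub (wtd_add (wtd_add (wtd_sub (wtd_add (wtd_sub
      (wtd_sub ?_ ?_) ?_) ?_) ?_) ?_) ?_) ?_) wtd_one) ?_
    · exact wtd_mul (m := 0) (n := 2) (wtd_neg (wtd_ofNat 4)) (wtd_X 2 (n := 2) (by decide))
    · exact wtd_mul (m := 1) (n := 1)
        (wtd_mul (m := 0) (n := 1) (wtd_ofNat 2) (wtd_X 0 (n := 1) (by decide)))
        (wtd_X 1 (n := 1) (by decide))
    · exact wtd_mul (m := 0) (n := 2) (wtd_ofNat 2) (wtd_X 1 (n := 2) (by decide))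
    · exact wtd_mul (m := 0) (n := 2) (wtd_ofNat 2)
        (wtd_pow (m := 1) 2 (wtd_X 1 (n := 1) (by decide)))
    · exact wtd_mul (m := 0) (n := 2) (wtd_ofNat 2) (wtd_X 0 (n := 2) (by decide))
    · exact wtd_mul (m := 1) (n := 1)
        (wtd_mul (m := 0) (n := 1) (wtd_ofNat 10) (wtd_X 4 (n := 1) (by decide)))
        (wtd_X 1 (n := 1) (by decide))
    · exact wtd_mul (m := 1) (n := 1)
        (wtd_mul (m := 0) (n := 1) (wtd_ofNat 5) (wtd_X 4 (n := 1) (by decide)))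
        (wtd_X 0 (n := 1) (by decide))
    · exact wtd_mul (m := 0) (n := 2) (wtd_ofNat 5) (wtd_X 4 (n := 2) (by decide))
    · exact wtd_pow (m := 1) 2 (wtd_X 0 (n := 1) (by decide))
  · show W wv (X 2 - X 1 ^ 2) ≤ 2
    exact wtd_sub (wtd_X 2 (n := 2) (by decide))
      (wtd_pow (m := 1) 2 (wtd_X 1 (n := 1) (by decide)))
  · show W wv (X 3 - X 1 * X 2) ≤ 3
    exact wtd_sub (wtd_X 3 (n := 3) (by decide))
      (wtd_mul (m := 1) (n := 2) (wtd_X 1 (n := 1) (by decide)) (wtd_X 2 (n := 2) (by decide)))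
  · show W wv ((10 * X 4 * X 3 - 35 * X 4 * X 2 + 50 * X 4 * X 1 - 24 * X 4) - X 1 * X 3) ≤ 4
    refine wtd_sub (wtd_sub (wtd_add (wtd_sub ?_ ?_) ?_) ?_) ?_
    · exact wtd_mul (m := 1) (n := 3)
        (wtd_mul (m := 0) (n := 1) (wtd_ofNat 10) (wtd_X 4 (n := 1) (by decide)))
        (wtd_X 3 (n := 3) (by decide))
    · exact wtd_mul (m := 2) (n := 2)
        (wtd_mul (m := 0) (n := 2) (wtd_ofNat 35) (wtd_X 4 (n := 2) (by decide)))
        (wtd_X 2 (n := 2) (by decide))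
    · exact wtd_mul (m := 3) (n := 1)
        (wtd_mul (m := 0) (n := 3) (wtd_ofNat 50) (wtd_X 4 (n := 3) (by decide)))
        (wtd_X 1 (n := 1) (by decide))
    · exact wtd_mul (m := 0) (n := 4) (wtd_ofNat 24) (wtd_X 4 (n := 4) (by decide))
    · exact wtd_mul (m := 1) (n := 3) (wtd_X 1 (n := 1) (by decide))
        (wtd_X 3 (n := 3) (by decide))
  · show W wv (5 * X 4 * (X 4 - 1)) ≤ 2
    exact wtd_mul (m := 1) (n := 1)
      (wtd_mul (m := 0) (n := 1) (wtd_ofNat 5) (wtd_X 4 (n := 1) (by decide)))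
      (wtd_sub (wtd_X 4 (n := 1) (by decide)) wtd_one)

lemma wtd_derivation {p : MvPolynomial (Fin 5) ℚ} {n : ℕ} (hp : W wv p ≤ n) :
    W wv (quinticDerivation p) ≤ n + 1 := by
  classical
  have hsum : quinticDerivation p
      = ∑ d ∈ p.support, quinticDerivation (monomial d (coeff d p)) := by
    conv_lhs => rw [p.as_sum]
    exact map_sum quinticDerivation.toLinearMap _ _
  rw [hsum]
  refine wtd_sum _ _ fun d hd => ?_
  rw [quinticDerivation_eq, mkDerivation_monomial]
  refine wtd_smul _ ?_
  rw [Finsupp.sum]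
  refine wtd_sum _ _ fun i hi => ?_
  rw [smul_eq_mul]
  have hkey : weight wv (d - Finsupp.single i 1) + (wv i + 1) ≤ n + 1 := by
    have hle : Finsupp.single i 1 ≤ d := by
      rw [Finsupp.single_le_iff]
      exact Nat.one_le_iff_ne_zero.mpr (Finsupp.mem_support_iff.mp hi)
    have : weight wv (d - Finsupp.single i 1) + weight wv (Finsupp.single i 1)
        = weight wv d := by
      rw [← map_add, tsub_add_cancel_of_le hle]
    rw [weight_single, one_mul] at this
    have hdn : weight wv d ≤ n := le_trans (le_weightedTotalDegree _ hd) hp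
    omega
  exact wtd_mono (wtd_mul (wtd_monomial _ _) (wtd_qf i)) hkey

/-- The genus-one one-point functions `P₁⁽ⁿ⁾` of the quintic: `genusOneSeq k` represents
`P₁⁽ᵏ⁺¹⁾`, with `P₁⁽¹⁾ = (31/3)(1−B) + (5/12)(X−1) − (1/2)A` and the covariant recursion
`P₁⁽ⁿ⁺¹⁾ = D(P₁⁽ⁿ⁾) − n(A+1)·P₁⁽ⁿ⁾` (the term `(2−2g)(B − (5/2)X)` vanishes at `g = 1`). -/
noncomputable def genusOneSeq : ℕ → MvPolynomial (Fin 5) ℚ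
  | 0 => C (31 / 3) * (1 - X 1) + C (5 / 12) * (X 4 - 1) - C (1 / 2) * X 0
  | k + 1 => quinticDerivation (genusOneSeq k)
      - C ((k : ℚ) + 1) * (X 0 + 1) * genusOneSeq k

/-- Each `P₁⁽ⁿ⁾` is a polynomial in `A, B, B₂, B₃, X` of weighted degree at most `n`
(weights `deg A = deg B = deg X = 1`, `deg B₂ = 2`, `deg B₃ = 3`). -/
theorem genusOneSeq_weighted_degree (k : ℕ) :
    weightedTotalDegree (![1, 1, 2, 3, 1] : Fin 5 → ℕ) (genusOneSeq k) ≤ k + 1 := by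
  induction k with
  | zero =>
    show W wv (C (31 / 3) * (1 - X 1) + C (5 / 12) * (X 4 - 1) - C (1 / 2) * X 0) ≤ 1
    refine wtd_sub (wtd_add ?_ ?_) ?_
    · exact wtd_mul (m := 0) (n := 1) (wtd_C _)
        (wtd_sub wtd_one (wtd_X 1 (n := 1) (by decide)))
    · exact wtd_mul (m := 0) (n := 1) (wtd_C _)
        (wtd_sub (wtd_X 4 (n := 1) (by decide)) wtd_one)
    · exact wtd_mul (m := 0) (n := 1) (wtd_C _) (wtd_X 0 (n := 1) (by decide))
  | succ k ih =>
    show W wv (quinticDerivation (genusOneSeq k)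
      - C ((k : ℚ) + 1) * (X 0 + 1) * genusOneSeq k) ≤ k + 1 + 1
    refine wtd_sub (wtd_derivation ih) ?_
    refine wtd_mono (wtd_mul (m := 1) (n := k + 1)
      (wtd_mul (m := 0) (n := 1) (wtd_C _)
        (wtd_add (wtd_X 0 (n := 1) (by decide)) wtd_one)) ih) (by omega)
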